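/- The function f_3 defined on the unit disk by f_3(z) = ∫₀^z (1 + tanh(t³))^{1/2} dt belongs to the class BT_B, and its third logarithmic coefficient γ_3 = (1/2)(a_4 − a_2·a_3 + a_2³/3) satisfies |γ_3| = 1/16 (its Taylor coefficients satisfy a_2 = a_3 = 0 and a_4 = 1/8). Hence the bound |γ_3| ≤ 1/16 for the class BT_B is sharp. -/

import Mathlib

open Complex Metric

/-- Principal branch of the square root: `w^(1/2) = exp((1/2) * Log w)`. -/
noncomputable def psqrt (w : ℂ) : ℂ := Complex.exp ((1/2 : ℂ) * Complex.log w)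

/-- The `n`-th Taylor coefficient of `f` at `0`, i.e. `f^(n)(0)/n!`. -/
noncomputable def tCoeff (f : ℂ → ℂ) (n : ℕ) : ℂ := iteratedDeriv n f 0 / n.factorial

/-- The class `BT_B` of bounded turning functions associated with the bean-shaped domain:
`f` is analytic on the unit disk, `f 0 = 0`, `f' 0 = 1`, `f` injective on the disk,
and `f'(z) = (1 + tanh (ω z))^(1/2)` for a Schwarz function `ω`. -/
def IsBTB (f : ℂ → ℂ) : Prop :=
  AnalyticOnNhd ℂ f (ball 0 1) ∧ f 0 = 0 ∧ deriv f 0 = 1 ∧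
  Set.InjOn f (ball 0 1) ∧
  ∃ ω : ℂ → ℂ, AnalyticOnNhd ℂ ω (ball 0 1) ∧ ω 0 = 0 ∧
    (∀ z ∈ ball (0:ℂ) 1, ‖ω z‖ < 1) ∧
    (∀ z ∈ ball (0:ℂ) 1, deriv f z = psqrt (1 + Complex.tanh (ω z)))

noncomputable def f₃ (z : ℂ) : ℂ :=
  ∫ t in (0:ℝ)..1, z * psqrt (1 + Complex.tanh (((t : ℂ) * z)^3))

/-!
On the unit disk `|Im z³| < 1 < π/2`, so `1 + tanh z³ = 2 / (1 + exp (-2 z³))` lies in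
the slit plane. Hence `g z = (1 + tanh z³)^(1/2)` is holomorphic there with `Re g > 0`.
The radial integral `f₃` agrees with a primitive of `g` given by Morera's theorem, so
`f₃' = g` (with Schwarz function `ω z = z³`), and `Re f₃' > 0` makes `f₃` univalent by
the Noshiro–Warschawski argument. Finally `g z = h (z³)` with `h 0 = 1`, `h' 0 = 1/2`, so
`g' z = z² · 3 h' (z³)` and Leibniz' rule gives `g' 0 = g'' 0 = 0` and
`g''' 0 = 6 h' 0 = 3`, i.e. `a₂ = a₃ = 0` and `a₄ = 3 / 4! = 1/8`.
-/

open Topology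

namespace Complex

lemma exp_mem_slitPlane_of_abs_im_lt {z : ℂ} (hz : |z.im| < Real.pi) : exp z ∈ slitPlane := by
  obtain ⟨hlo, hhi⟩ := abs_lt.1 hz
  rw [exp_mem_slitPlane, (toIocMod_eq_self _).2 ⟨hlo, by linarith⟩]
  exact hhi.ne

lemma one_add_mem_slitPlane {z : ℂ} (hz : z ∈ slitPlane) : 1 + z ∈ slitPlane := by
  rw [mem_slitPlane_iff] at hz ⊢
  simp only [add_re, one_re, add_im, one_im, zero_add]
  exact hz.imp (fun h => by linarith) id

lemma two_mul_mem_slitPlane {z : ℂ} (hz : z ∈ slitPlane) : 2 * z ∈ slitPlane := by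
  rw [mem_slitPlane_iff] at hz ⊢
  simpa using hz

lemma inv_mem_slitPlane {z : ℂ} (hz : z ∈ slitPlane) : z⁻¹ ∈ slitPlane := by
  have hn : 0 < normSq z := normSq_pos.2 (slitPlane_ne_zero hz)
  rw [mem_slitPlane_iff] at hz ⊢
  simp only [inv_re, inv_im, neg_div, ne_eq, neg_eq_zero, div_eq_zero_iff, not_or]
  exact hz.imp (fun h => div_pos h hn) fun h => ⟨h, hn.ne'⟩

lemma two_mul_cosh_eq (w : ℂ) : 2 * cosh w = exp w * (1 + exp (-2 * w)) := by
  rw [cosh, mul_add, ← exp_add]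
  ring_nf

variable {w : ℂ}

lemma cosh_ne_zero_of_one_add_exp_ne_zero (hw : 1 + exp (-2 * w) ≠ 0) : cosh w ≠ 0 := fun h =>
  mul_ne_zero (exp_ne_zero w) hw (by rw [← two_mul_cosh_eq, h, mul_zero])

lemma one_add_tanh_eq (hw : 1 + exp (-2 * w) ≠ 0) :
    1 + tanh w = 2 * (1 + exp (-2 * w))⁻¹ := by
  have hc := cosh_ne_zero_of_one_add_exp_ne_zero hw
  rw [tanh_eq_sinh_div_cosh, eq_mul_inv_iff_mul_eq₀ hw, one_add_div hc, div_mul_eq_mul_div,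
    div_eq_iff hc, cosh_add_sinh]
  linear_combination -(two_mul_cosh_eq w)

lemma one_add_exp_neg_two_mul_mem_slitPlane (hw : |w.im| < Real.pi / 2) :
    1 + exp (-2 * w) ∈ slitPlane := by
  refine one_add_mem_slitPlane (exp_mem_slitPlane_of_abs_im_lt ?_)
  simp only [mul_im, neg_re, neg_im, re_ofNat, im_ofNat, neg_zero, zero_mul, add_zero, abs_mul,
    abs_neg, Nat.abs_ofNat]
  linarith

lemma cosh_ne_zero_of_abs_im_lt (hw : |w.im| < Real.pi / 2) : cosh w ≠ 0 :=
  cosh_ne_zero_of_one_add_exp_ne_zero <|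
    slitPlane_ne_zero (one_add_exp_neg_two_mul_mem_slitPlane hw)

lemma one_add_tanh_mem_slitPlane (hw : |w.im| < Real.pi / 2) : 1 + tanh w ∈ slitPlane := by
  have h := one_add_exp_neg_two_mul_mem_slitPlane hw
  rw [one_add_tanh_eq (slitPlane_ne_zero h)]
  exact two_mul_mem_slitPlane (inv_mem_slitPlane h)

end Complex

lemma re_psqrt_pos {w : ℂ} (hw : w ∈ slitPlane) : 0 < (psqrt w).re := by
  have harg : |w.arg / 2| < Real.pi / 2 := by
    rw [abs_lt]
    constructor <;> linarith [neg_pi_lt_arg w, (arg_le_pi w).lt_of_ne (slitPlane_arg_ne_pi hw)]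
  have him : ((1 / 2 : ℂ) * log w).im = w.arg / 2 := by
    rw [show (1 / 2 : ℂ) = ((1 / 2 : ℝ) : ℂ) by norm_num, im_ofReal_mul, log_im]
    ring
  rw [psqrt, exp_re, him]
  exact mul_pos (Real.exp_pos _) (Real.cos_pos_of_mem_Ioo (abs_lt.1 harg))

lemma analyticAt_psqrt {w : ℂ} (hw : w ∈ slitPlane) : AnalyticAt ℂ psqrt w :=
  (analyticAt_const.mul (analyticAt_clog hw)).cexp

noncomputable def sqrtOneAddTanh (w : ℂ) : ℂ := psqrt (1 + tanh w)

lemma analyticAt_sqrtOneAddTanh {w : ℂ} (hw : |w.im| < Real.pi / 2) :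
    AnalyticAt ℂ sqrtOneAddTanh w := by
  have htanh : AnalyticAt ℂ tanh w := by
    rw [show tanh = fun w => sinh w / cosh w from funext tanh_eq_sinh_div_cosh]
    exact analyticAt_sinh.fun_div analyticAt_cosh (cosh_ne_zero_of_abs_im_lt hw)
  have hadd : AnalyticAt ℂ (fun w => 1 + tanh w) w := analyticAt_const.add htanh
  exact AnalyticAt.comp (f := fun w => 1 + tanh w)
    (analyticAt_psqrt (one_add_tanh_mem_slitPlane hw)) hadd

lemma sqrtOneAddTanh_zero : sqrtOneAddTanh 0 = 1 := by
  simp [sqrtOneAddTanh, psqrt]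

lemma hasDerivAt_sqrtOneAddTanh_zero : HasDerivAt sqrtOneAddTanh (1 / 2) 0 := by
  have htanh : HasDerivAt tanh 1 0 := by
    rw [show tanh = fun w => sinh w / cosh w from funext tanh_eq_sinh_div_cosh]
    simpa using (hasDerivAt_sinh 0).fun_div (hasDerivAt_cosh 0) (by simp)
  have hlog := ((htanh.const_add 1).clog (by simp)).const_mul (1 / 2 : ℂ)
  rw [show sqrtOneAddTanh = fun w => exp ((1 / 2) * log (1 + tanh w)) from rfl]
  simpa using hlog.cexp

lemma ofReal_mul_mem_ball_zero {r t : ℝ} {z : ℂ} (hz : z ∈ ball (0 : ℂ) r)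
    (ht : t ∈ Set.uIcc 0 1) : (t : ℂ) * z ∈ ball (0 : ℂ) r := by
  rw [Set.uIcc_of_le zero_le_one] at ht
  rw [mem_ball_zero_iff] at hz ⊢
  rw [norm_mul, norm_real, Real.norm_of_nonneg ht.1]
  exact lt_of_le_of_lt (mul_le_of_le_one_left (norm_nonneg z) ht.2) hz

-- The radial integral differs by a constant from the primitive given by Morera's theorem.
lemma hasDerivAt_integral_mul_ofReal_mul {g : ℂ → ℂ} {r : ℝ}
    (hg : DifferentiableOn ℂ g (ball 0 r)) {z : ℂ} (hz : z ∈ ball (0 : ℂ) r) :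
    HasDerivAt (fun w => ∫ t in (0 : ℝ)..1, w * g (t * w)) (g z) z := by
  obtain ⟨G, hG⟩ := hg.isExactOn_ball
  have hFTC : ∀ w ∈ ball (0 : ℂ) r, ∫ t in (0 : ℝ)..1, w * g (t * w) = G w - G 0 := by
    intro w hw
    have hderiv : ∀ t ∈ Set.uIcc (0 : ℝ) 1,
        HasDerivAt (fun s : ℝ => G (s * w)) (w * g (t * w)) t := by
      intro t ht
      have := (hG _ (ofReal_mul_mem_ball_zero hw ht)).comp (t : ℂ)
        ((hasDerivAt_id (t : ℂ)).mul_const w)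
      simpa [mul_comm] using this.comp_ofReal
    have hcont : ContinuousOn (fun t : ℝ => w * g (t * w)) (Set.uIcc 0 1) :=
      continuousOn_const.mul <| hg.continuousOn.comp (by fun_prop) fun t ht =>
        ofReal_mul_mem_ball_zero hw ht
    simpa using intervalIntegral.integral_eq_sub_of_hasDerivAt hderiv hcont.intervalIntegrable
  exact ((hG z hz).sub_const (G 0)).congr_of_eventuallyEq <|
    Filter.eventuallyEq_of_mem (isOpen_ball.mem_nhds hz) hFTC

-- Noshiro–Warschawski: on the segment from `a` to `b`, `t ↦ Re (f / (b - a))` has derivative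
-- `Re f' > 0`, so it cannot take the same value at both ends.
theorem Convex.injOn_of_hasDerivAt_of_re_pos {s : Set ℂ} (hs : Convex ℝ s) {f f' : ℂ → ℂ}
    (hf : ∀ z ∈ s, HasDerivAt f (f' z) z) (hf' : ∀ z ∈ s, 0 < (f' z).re) : s.InjOn f := by
  intro a ha b hb hab
  by_contra hne
  have hba : b - a ≠ 0 := sub_ne_zero.2 (Ne.symm hne)
  have hmem : ∀ t ∈ Set.Icc (0 : ℝ) 1, a + t * (b - a) ∈ s := fun t ht => by
    simpa [Complex.real_smul] using hs.add_smul_sub_mem ha hb ht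
  have hφ : ∀ t ∈ Set.Icc (0 : ℝ) 1,
      HasDerivAt (fun t : ℝ => (f (a + t * (b - a)) / (b - a)).re)
        (f' (a + t * (b - a))).re t := by
    intro t ht
    have hline : HasDerivAt (fun w : ℂ => a + w * (b - a)) (b - a) t := by
      simpa using ((hasDerivAt_id (t : ℂ)).mul_const (b - a)).const_add a
    have := ((hf _ (hmem t ht)).comp (t : ℂ) hline).div_const (b - a)
    rw [mul_div_cancel_right₀ _ hba] at this
    exact this.real_of_complex
  obtain ⟨c, hc, hslope⟩ := exists_hasDerivAt_eq_slope _ _ zero_lt_one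
    (fun t ht => (hφ t ht).continuousAt.continuousWithinAt)
    (fun t ht => hφ t (Set.Ioo_subset_Icc_self ht))
  rw [ofReal_one, one_mul, add_sub_cancel, ofReal_zero, zero_mul, add_zero, hab, sub_self,
    zero_div] at hslope
  exact (hf' _ (hmem c (Set.Ioo_subset_Icc_self hc))).ne' hslope

section IteratedDeriv

variable {𝕜 : Type*} [NontriviallyNormedField 𝕜]

lemma iteratedDeriv_pow_mul_zero {k : 𝕜 → 𝕜} {n : ℕ} (m : ℕ)
    (hk : ContDiffAt 𝕜 n k 0) :
    iteratedDeriv n (fun z => z ^ m * k z) 0 =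
      n.choose m * m.factorial * iteratedDeriv (n - m) k 0 := by
  rw [iteratedDeriv_fun_mul (by fun_prop) hk, Finset.sum_eq_single m]
  · rw [iteratedDeriv_fun_pow_zero, if_pos rfl]
  · intro i _ hi
    rw [iteratedDeriv_fun_pow_zero, if_neg hi, Nat.cast_zero, mul_zero, zero_mul]
  · intro hm
    simp [Nat.choose_eq_zero_of_lt (by simpa using hm)]

variable [CompleteSpace 𝕜]

lemma iteratedDeriv_succ_comp_pow_zero {h : 𝕜 → 𝕜} (hh : AnalyticAt 𝕜 h 0) (m n : ℕ) :
    iteratedDeriv (n + 1) (fun z => h (z ^ (m + 1))) 0 =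
      n.choose m * m.factorial *
        iteratedDeriv (n - m) (fun z => (m + 1) * deriv h (z ^ (m + 1))) 0 := by
  have hpow : Filter.Tendsto (fun z : 𝕜 => z ^ (m + 1)) (𝓝 0) (𝓝 0) := by
    simpa using (continuous_pow (m + 1)).tendsto (0 : 𝕜)
  have hderiv : deriv (fun z => h (z ^ (m + 1))) =ᶠ[𝓝 0]
      fun z => z ^ m * ((m + 1) * deriv h (z ^ (m + 1))) := by
    filter_upwards [hpow.eventually hh.eventually_analyticAt] with z hz
    have : HasDerivAt (fun z => h (z ^ (m + 1)))
        (deriv h (z ^ (m + 1)) * ((m + 1 : ℕ) * z ^ m)) z :=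
      hz.differentiableAt.hasDerivAt.comp z (hasDerivAt_pow (m + 1) z)
    rw [this.deriv]
    push_cast
    ring
  rw [iteratedDeriv_succ', hderiv.iteratedDeriv_eq, iteratedDeriv_pow_mul_zero]
  have hh' : AnalyticAt 𝕜 (deriv h) ((0 : 𝕜) ^ (m + 1)) := by simpa using hh.deriv
  have hpow' : AnalyticAt 𝕜 (fun z : 𝕜 => z ^ (m + 1)) 0 := by fun_prop
  exact (analyticAt_const.mul
    (AnalyticAt.comp (f := fun z : 𝕜 => z ^ (m + 1)) hh' hpow')).contDiffAt

end IteratedDeriv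

lemma norm_pow_three_lt_one {z : ℂ} (hz : z ∈ ball (0 : ℂ) 1) : ‖z ^ 3‖ < 1 := by
  rw [norm_pow]
  exact pow_lt_one₀ (norm_nonneg z) (mem_ball_zero_iff.1 hz) (by norm_num)

lemma abs_im_pow_three_lt {z : ℂ} (hz : z ∈ ball (0 : ℂ) 1) : |(z ^ 3).im| < Real.pi / 2 := by
  linarith [abs_im_le_norm (z ^ 3), norm_pow_three_lt_one hz, Real.pi_gt_three]

lemma analyticOnNhd_sqrtOneAddTanh_pow_three :
    AnalyticOnNhd ℂ (fun z => sqrtOneAddTanh (z ^ 3)) (ball 0 1) := fun z hz =>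
  AnalyticAt.comp (f := fun z : ℂ => z ^ 3) (analyticAt_sqrtOneAddTanh (abs_im_pow_three_lt hz))
    (by fun_prop)

lemma hasDerivAt_f₃ {z : ℂ} (hz : z ∈ ball (0 : ℂ) 1) :
    HasDerivAt f₃ (sqrtOneAddTanh (z ^ 3)) z :=
  hasDerivAt_integral_mul_ofReal_mul (g := fun z => sqrtOneAddTanh (z ^ 3))
    analyticOnNhd_sqrtOneAddTanh_pow_three.differentiableOn hz

lemma f₃_injOn : (ball (0 : ℂ) 1).InjOn f₃ :=
  (convex_ball 0 1).injOn_of_hasDerivAt_of_re_pos (fun _ hz => hasDerivAt_f₃ hz)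
    fun _ hz => re_psqrt_pos (one_add_tanh_mem_slitPlane (abs_im_pow_three_lt hz))

lemma iteratedDeriv_f₃_zero (n : ℕ) :
    iteratedDeriv (n + 2) f₃ 0 =
      n.choose 2 * 6 * iteratedDeriv (n - 2) (fun z => deriv sqrtOneAddTanh (z ^ 3)) 0 := by
  have hderiv : deriv f₃ =ᶠ[𝓝 0] fun z => sqrtOneAddTanh (z ^ 3) :=
    Filter.eventuallyEq_of_mem (ball_mem_nhds 0 one_pos) fun _ hz => (hasDerivAt_f₃ hz).deriv
  have h0 : |(0 : ℂ).im| < Real.pi / 2 := by simpa using Real.pi_pos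
  have := iteratedDeriv_succ_comp_pow_zero (analyticAt_sqrtOneAddTanh h0) 2 n
  norm_num at this
  rw [iteratedDeriv_succ', hderiv.iteratedDeriv_eq, this]
  ring

theorem BTB_gamma3_sharp :
    IsBTB f₃ ∧ tCoeff f₃ 2 = 0 ∧ tCoeff f₃ 3 = 0 ∧ tCoeff f₃ 4 = 1/8 ∧
      ‖(1/2) * (tCoeff f₃ 4 - tCoeff f₃ 2 * tCoeff f₃ 3 + (tCoeff f₃ 2)^3 / 3)‖
        = 1/16 := by
  have hc2 : tCoeff f₃ 2 = 0 := by simp [tCoeff, iteratedDeriv_f₃_zero 0]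
  have hc3 : tCoeff f₃ 3 = 0 := by simp [tCoeff, iteratedDeriv_f₃_zero 1]
  have hc4 : tCoeff f₃ 4 = 1 / 8 := by
    simp [tCoeff, iteratedDeriv_f₃_zero 2, hasDerivAt_sqrtOneAddTanh_zero.deriv, Nat.factorial]
    norm_num
  refine ⟨⟨?_, by simp [f₃], ?_, f₃_injOn, fun z => z ^ 3, fun _ _ => by fun_prop, by simp,
    fun _ => norm_pow_three_lt_one, fun z hz => (hasDerivAt_f₃ hz).deriv⟩, hc2, hc3, hc4, ?_⟩
  · exact DifferentiableOn.analyticOnNhd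
      (fun z hz => (hasDerivAt_f₃ hz).differentiableAt.differentiableWithinAt) isOpen_ball
  · simpa [sqrtOneAddTanh_zero] using (hasDerivAt_f₃ (mem_ball_self one_pos)).deriv
  · rw [hc2, hc3, hc4]
    norm_num
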